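/- Let w ∈ B_3 be a positive word in σ_1, σ_2 that is not a power of σ_1 nor of σ_2, and let t ∈ ℂ satisfy |t| < (3 - √5)/2. Then the spectral radius of B_t(w) is strictly less than 1; in particular Δ_ŵ(t) ≠ 0 whenever 0 < |t| < (3-√5)/2. -/

import Mathlib

open Polynomial

/-- The positive generators σ₁, σ₂ of the braid group `B₃`. -/
inductive BGen
  | s1 | s2
deriving DecidableEq

/-- The reduced Burau representation over `ℤ[t]`, on the positive generators. -/
noncomputable def burauGen : BGen → Matrix (Fin 2) (Fin 2) (Polynomial ℤ)
  | .s1 => !![-X, 1; 0, 1]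
  | .s2 => !![1, 0; X, -X]

/-- The Burau matrix of a positive word, over `ℤ[t]`. -/
noncomputable def burauPos (w : List BGen) : Matrix (Fin 2) (Fin 2) (Polynomial ℤ) :=
  (w.map burauGen).prod

/-- The Burau matrix of a positive word, evaluated at `t ∈ ℂ`. -/
noncomputable def burauWordC (t : ℂ) (w : List BGen) : Matrix (Fin 2) (Fin 2) ℂ :=
  (burauPos w).map (fun p => (Polynomial.aeval t) p)

/-- The Alexander polynomial of the closure of a positive word,
`Δ = det(B_t(w) - I) / (t² + t + 1)`. -/
noncomputable def alexPoly (w : List BGen) : Polynomial ℤ :=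
  (burauPos w - 1).det /ₘ (X ^ 2 + X + 1)

/-! ### Auxiliary material -/

section Aux

open Matrix

/-- The Burau generator matrices evaluated at `t`. -/
noncomputable def genC (t : ℂ) : BGen → Matrix (Fin 2) (Fin 2) ℂ
  | .s1 => !![-t, 1; 0, 1]
  | .s2 => !![1, 0; t, -t]

lemma genC_eq (t : ℂ) (g : BGen) : (burauGen g).map (fun p => (Polynomial.aeval t) p) = genC t g := by
  cases g <;> ext i j <;> fin_cases i <;> fin_cases j <;>
    simp [burauGen, genC, Matrix.map_apply]

lemma burauWordC_eq (t : ℂ) (w : List BGen) :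
    burauWordC t w = (w.map (genC t)).prod := by
  unfold burauWordC burauPos
  induction w with
  | nil =>
    simp [Matrix.map_one (fun p => (Polynomial.aeval t) p) (map_zero _) (map_one _)]
  | cons g l ih =>
    simp only [List.map_cons, List.prod_cons, ← ih, ← genC_eq t g]
    exact Matrix.map_mul

/-- An adjacent distinct pair exists in any list containing both generators. -/
lemma exists_adj : ∀ (w : List BGen), BGen.s1 ∈ w → BGen.s2 ∈ w →
    ∃ (x y : List BGen) (a b : BGen), a ≠ b ∧ w = x ++ a :: b :: y := by
  intro w
  induction w with
  | nil => intro h; simp at h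
  | cons c l ih =>
    intro h1 h2
    cases l with
    | nil =>
      simp only [List.mem_singleton] at h1 h2
      rw [← h2] at h1; exact absurd h1 (by simp at h1)
    | cons d l' =>
      by_cases hcd : c = d
      · subst hcd
        have h1' : BGen.s1 ∈ c :: l' := by
          rcases List.mem_cons.mp h1 with h | h
          · exact h ▸ List.mem_cons_self
          · exact h
        have h2' : BGen.s2 ∈ c :: l' := by
          rcases List.mem_cons.mp h2 with h | h
          · exact h ▸ List.mem_cons_self
          · exact h
        obtain ⟨x, y, a, b, hab, hw⟩ := ih h1' h2'
        exact ⟨c :: x, y, a, b, hab, by rw [List.cons_append, ← hw]⟩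
      · exact ⟨[], l', c, d, hcd, rfl⟩

/-- At `t = 0`, a word with `s1` before `s2` has zero Burau matrix. -/
lemma zero_prod : ∀ (y z : List BGen),
    ((List.map (genC 0) (BGen.s1 :: (y ++ BGen.s2 :: z))).prod) = 0 := by
  intro y
  induction y with
  | nil =>
    intro z
    simp only [List.nil_append, List.map_cons, List.prod_cons, ← mul_assoc]
    have : genC 0 BGen.s1 * genC 0 BGen.s2 = 0 := by
      ext i j; fin_cases i <;> fin_cases j <;>
        simp [genC, Matrix.mul_apply, Fin.sum_univ_two]
    rw [this, zero_mul]
  | cons c y' ih =>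
    intro z
    cases c with
    | s1 =>
      have h : genC 0 BGen.s1 * genC 0 BGen.s1 = genC 0 BGen.s1 := by
        ext i j; fin_cases i <;> fin_cases j <;>
          simp [genC, Matrix.mul_apply, Fin.sum_univ_two]
      calc ((List.map (genC 0) (BGen.s1 :: (BGen.s1 :: y' ++ BGen.s2 :: z))).prod)
          = genC 0 BGen.s1 * genC 0 BGen.s1 *
            ((List.map (genC 0) (y' ++ BGen.s2 :: z)).prod) := by
            simp [List.prod_cons, mul_assoc]
        _ = genC 0 BGen.s1 * ((List.map (genC 0) (y' ++ BGen.s2 :: z)).prod) := by rw [h]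
        _ = ((List.map (genC 0) (BGen.s1 :: (y' ++ BGen.s2 :: z))).prod) := by
            simp [List.prod_cons]
        _ = 0 := ih z
    | s2 =>
      have h : genC 0 BGen.s1 * genC 0 BGen.s2 = 0 := by
        ext i j; fin_cases i <;> fin_cases j <;>
          simp [genC, Matrix.mul_apply, Fin.sum_univ_two]
      calc ((List.map (genC 0) (BGen.s1 :: (BGen.s2 :: y' ++ BGen.s2 :: z))).prod)
          = genC 0 BGen.s1 * genC 0 BGen.s2 *
            ((List.map (genC 0) (y' ++ BGen.s2 :: z)).prod) := by
            simp [List.prod_cons, mul_assoc]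
        _ = 0 := by rw [h, zero_mul]

section Norm

attribute [local instance] Matrix.linftyOpNormedRing Matrix.linftyOpNormedAlgebra

lemma norm2_le {A : Matrix (Fin 2) (Fin 2) ℂ} {r : ℝ}
    (h0 : ‖A 0 0‖ + ‖A 0 1‖ ≤ r) (h1 : ‖A 1 0‖ + ‖A 1 1‖ ≤ r) : ‖A‖ ≤ r := by
  have hr : 0 ≤ r := le_trans (by positivity) h0
  rw [Matrix.linfty_opNorm_def, ← Real.coe_toNNReal r hr, NNReal.coe_le_coe]
  refine Finset.sup_le fun i _ => ?_
  rw [← NNReal.coe_le_coe, Real.coe_toNNReal r hr, NNReal.coe_sum]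
  fin_cases i <;> simpa [Fin.sum_univ_two] using ‹_›

/-- Key eigenvalue bound. -/
lemma eigen_bound (t : ℂ) (w : List BGen) (h1 : BGen.s1 ∈ w) (h2 : BGen.s2 ∈ w)
    (ht : ‖t‖ < (3 - Real.sqrt 5) / 2)
    {lam : ℂ} {v : Fin 2 → ℂ} (hv : v ≠ 0)
    (heig : (burauWordC t w) *ᵥ v = lam • v) :
    ‖lam‖ ≤ ‖t‖ + Real.sqrt (‖t‖) := by
  by_cases ht0 : t = 0
  · subst ht0
    -- nilpotent case
    obtain ⟨x₁, y₁, hw1⟩ := List.append_of_mem h1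
    obtain ⟨x₂, y₂, hw2⟩ := List.append_of_mem h2
    have hM2 : burauWordC 0 w * burauWordC 0 w = 0 := by
      rw [burauWordC_eq, ← List.prod_append, ← List.map_append]
      have hww : w ++ w = x₁ ++ (BGen.s1 :: ((y₁ ++ x₂) ++ BGen.s2 :: y₂)) := by
        calc w ++ w = (x₁ ++ BGen.s1 :: y₁) ++ (x₂ ++ BGen.s2 :: y₂) := by rw [← hw1, ← hw2]
          _ = _ := by simp
      rw [hww, List.map_append, List.prod_append, zero_prod (y₁ ++ x₂) y₂, mul_zero]
    obtain ⟨i, hi⟩ := Function.ne_iff.mp hv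
    have : lam • lam • v = 0 := by
      have h' := congrArg (fun M => M *ᵥ v) hM2
      simp only [← Matrix.mulVec_mulVec, heig, Matrix.mulVec_smul, Matrix.zero_mulVec] at h'
      exact h'
    have hlz : lam = 0 := by
      have := congrFun this i
      simp only [Pi.smul_apply, smul_eq_mul, Pi.zero_apply] at this
      rcases mul_eq_zero.mp this with h | h
      · exact h
      · rcases mul_eq_zero.mp h with h | h
        · exact h
        · exact absurd h hi
    rw [hlz]
    simp [Real.sqrt_nonneg]
  · -- main case
    obtain ⟨u, hu⟩ : ∃ u : ℂ, u ^ 2 = t := IsAlgClosed.exists_pow_nat_eq t zero_lt_two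
    have hu0 : u ≠ 0 := by intro h; apply ht0; rw [← hu, h]; ring
    set a : ℝ := ‖u‖ with ha_def
    have ha : 0 ≤ a := norm_nonneg u
    have hnu : ‖u‖ = a := rfl
    have hat : ‖t‖ = a ^ 2 := by rw [← hu, norm_pow]
    have hnt : ‖t‖ = a ^ 2 := hat
    have hsq : Real.sqrt (‖t‖) = a := by rw [hat, Real.sqrt_sq ha]
    have h5 : Real.sqrt 5 ^ 2 = 5 := Real.sq_sqrt (by norm_num)
    have h5n : 0 ≤ Real.sqrt 5 := Real.sqrt_nonneg 5
    have ha2 : a ^ 2 < (3 - Real.sqrt 5) / 2 := by rw [← hat]; exact ht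
    have hs2 : (2 : ℝ) < Real.sqrt 5 := by
      rw [show (2:ℝ) = Real.sqrt 4 by rw [show (4:ℝ) = 2^2 by norm_num, Real.sqrt_sq]; norm_num]
      exact Real.sqrt_lt_sqrt (by norm_num) (by norm_num)
    have hac : a < (Real.sqrt 5 - 1) / 2 := by nlinarith
    have hr1 : a ^ 2 + a < 1 := by nlinarith
    have ha1 : a < 1 := by nlinarith
    have hrpos : 0 ≤ a ^ 2 + a := add_nonneg (sq_nonneg a) ha
    set D : Matrix (Fin 2) (Fin 2) ℂ := !![u, 0; 0, 1] with hD
    set E : Matrix (Fin 2) (Fin 2) ℂ := !![u⁻¹, 0; 0, 1] with hE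
    have hED : E * D = 1 := by
      ext i j
      fin_cases i <;> fin_cases j <;>
        simp [hD, hE, Matrix.mul_apply, Fin.sum_univ_two, inv_mul_cancel₀ hu0, Matrix.one_apply]
    set f : BGen → Matrix (Fin 2) (Fin 2) ℂ := fun g => D * genC t g * E with hf
    have hf1 : f BGen.s1 = !![-t, u; 0, 1] := by
      simp only [hf, hD, hE, genC]
      ext i j
      fin_cases i <;> fin_cases j <;> simp [Matrix.mul_apply, Fin.sum_univ_two] <;>
        (try field_simp) <;>
        first
          | ring1
          | linear_combination hu
          | linear_combination -hu
          | linear_combination u * hu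
          | linear_combination -(u * hu)
    have hf2 : f BGen.s2 = !![1, 0; u, -t] := by
      simp only [hf, hD, hE, genC]
      ext i j
      fin_cases i <;> fin_cases j <;>
        simp [Matrix.mul_apply, Fin.sum_univ_two, inv_mul_cancel₀ hu0] <;>
        (try field_simp) <;>
        first
          | ring1
          | linear_combination hu
          | linear_combination -hu
          | linear_combination u * hu
          | linear_combination -(u * hu)
    have hnf : ∀ g : BGen, ‖f g‖ ≤ 1 := by
      intro g
      cases g
      · rw [hf1]
        apply norm2_le
        · have : ‖(!![-t, u; 0, 1] : Matrix (Fin 2) (Fin 2) ℂ) 0 0‖ = a ^ 2 := by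
            simp [hnt]
          simp only [this]
          have : ‖(!![-t, u; 0, 1] : Matrix (Fin 2) (Fin 2) ℂ) 0 1‖ = a := by simp [hnu]
          rw [this]; linarith
        · simp
      · rw [hf2]
        apply norm2_le
        · simp
        · have : ‖(!![1, 0; u, -t] : Matrix (Fin 2) (Fin 2) ℂ) 1 0‖ = a := by simp [hnu]
          rw [this]
          have : ‖(!![1, 0; u, -t] : Matrix (Fin 2) (Fin 2) ℂ) 1 1‖ = a ^ 2 := by
            simp [hnt]
          rw [this]; linarith
    have hprod1 : ∀ l : List BGen, ‖(l.map f).prod‖ ≤ 1 := by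
      intro l
      induction l with
      | nil => simp only [List.map_nil, List.prod_nil]; exact le_of_eq norm_one
      | cons g l ih =>
        simp only [List.map_cons, List.prod_cons]
        calc ‖f g * (l.map f).prod‖ ≤ ‖f g‖ * ‖(l.map f).prod‖ :=
              Matrix.linfty_opNorm_mul _ _
          _ ≤ 1 * 1 := mul_le_mul (hnf g) ih (norm_nonneg _) zero_le_one
          _ = 1 := mul_one 1
    have hcube : a ^ 2 * a ≤ a ^ 2 + a := by nlinarith
    have hpair : ∀ g g' : BGen, g ≠ g' → ‖f g * f g'‖ ≤ a ^ 2 + a := by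
      intro g g' hgg
      have h12 : f BGen.s1 * f BGen.s2 = !![0, -(t * u); u, -t] := by
        rw [hf1, hf2]
        ext i j
        fin_cases i <;> fin_cases j <;> simp [Matrix.mul_apply, Fin.sum_univ_two] <;>
          first
          | ring1
          | linear_combination hu
          | linear_combination -hu
          | linear_combination u * hu
          | linear_combination -(u * hu)
      have h21 : f BGen.s2 * f BGen.s1 = !![-t, u; -(t * u), 0] := by
        rw [hf1, hf2]
        ext i j
        fin_cases i <;> fin_cases j <;> simp [Matrix.mul_apply, Fin.sum_univ_two] <;>
          first
          | ring1
          | linear_combination hu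
          | linear_combination -hu
          | linear_combination u * hu
          | linear_combination -(u * hu)
      have htu : ‖t * u‖ = a ^ 2 * a := by rw [norm_mul, hnt, hnu]
      cases g <;> cases g'
      · exact absurd rfl hgg
      · rw [h12]
        apply norm2_le
        · have : ‖(!![0, -(t*u); u, -t] : Matrix (Fin 2) (Fin 2) ℂ) 0 1‖ = a ^ 2 * a := by
            simp [hnt, hnu]
          simp only [this]
          have : ‖(!![0, -(t*u); u, -t] : Matrix (Fin 2) (Fin 2) ℂ) 0 0‖ = 0 := by simp
          rw [this]; linarith
        · have e0 : ‖(!![0, -(t*u); u, -t] : Matrix (Fin 2) (Fin 2) ℂ) 1 0‖ = a := by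
            simp [hnu]
          have e1 : ‖(!![0, -(t*u); u, -t] : Matrix (Fin 2) (Fin 2) ℂ) 1 1‖ = a ^ 2 := by
            simp [hnt]
          rw [e0, e1]; try linarith
      · rw [h21]
        apply norm2_le
        · have e0 : ‖(!![-t, u; -(t*u), 0] : Matrix (Fin 2) (Fin 2) ℂ) 0 0‖ = a ^ 2 := by
            simp [hnt]
          have e1 : ‖(!![-t, u; -(t*u), 0] : Matrix (Fin 2) (Fin 2) ℂ) 0 1‖ = a := by
            simp [hnu]
          rw [e0, e1]; try linarith
        · have e0 : ‖(!![-t, u; -(t*u), 0] : Matrix (Fin 2) (Fin 2) ℂ) 1 0‖ = a ^ 2 * a := by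
            simp [hnt, hnu]
          have e1 : ‖(!![-t, u; -(t*u), 0] : Matrix (Fin 2) (Fin 2) ℂ) 1 1‖ = 0 := by simp
          rw [e0, e1]; try linarith
      · exact absurd rfl hgg
    obtain ⟨x, y, g, g', hgg, hw⟩ := exists_adj w h1 h2
    have hnorm : ‖(w.map f).prod‖ ≤ a ^ 2 + a := by
      rw [hw]
      simp only [List.map_append, List.prod_append, List.map_cons, List.prod_cons,
        ← mul_assoc (f g) (f g')]
      calc ‖(x.map f).prod * (f g * f g' * (y.map f).prod)‖
          ≤ ‖(x.map f).prod‖ * ‖f g * f g' * (y.map f).prod‖ := Matrix.linfty_opNorm_mul _ _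
        _ ≤ 1 * ‖f g * f g' * (y.map f).prod‖ :=
            mul_le_mul_of_nonneg_right (hprod1 x) (norm_nonneg _)
        _ = ‖f g * f g' * (y.map f).prod‖ := one_mul _
        _ ≤ ‖f g * f g'‖ * ‖(y.map f).prod‖ := Matrix.linfty_opNorm_mul _ _
        _ ≤ (a ^ 2 + a) * 1 :=
            mul_le_mul (hpair g g' hgg) (hprod1 y) (norm_nonneg _) hrpos
        _ = a ^ 2 + a := mul_one _
    have hconj : ∀ l : List BGen, (l.map f).prod = D * (l.map (genC t)).prod * E := by
      intro l
      induction l with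
      | nil =>
        have hDE : D * E = 1 := by
          ext i j
          fin_cases i <;> fin_cases j <;>
            simp [hD, hE, Matrix.mul_apply, Fin.sum_univ_two, mul_inv_cancel₀ hu0,
              Matrix.one_apply]
        simp only [List.map_nil, List.prod_nil, mul_one, hDE]
      | cons c l ih =>
        simp only [List.map_cons, List.prod_cons]
        rw [ih, hf]
        simp only [mul_assoc]
        rw [← mul_assoc E D, hED, one_mul]
    set x0 : Fin 2 → ℂ := D *ᵥ v with hx0
    have hx0ne : x0 ≠ 0 := by
      intro h
      apply hv
      have hEv : E *ᵥ x0 = v := by rw [hx0, Matrix.mulVec_mulVec, hED, Matrix.one_mulVec]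
      rw [h, Matrix.mulVec_zero] at hEv
      exact hEv.symm
    have heig2 : ((w.map f).prod) *ᵥ x0 = lam • x0 := by
      rw [hconj w, ← burauWordC_eq, hx0, Matrix.mulVec_mulVec]
      have : D * burauWordC t w * E * D = D * burauWordC t w := by
        rw [mul_assoc, hED, mul_one]
      rw [this, ← Matrix.mulVec_mulVec, heig, Matrix.mulVec_smul]
    have hle : ‖lam‖ * ‖x0‖ ≤ (a ^ 2 + a) * ‖x0‖ := by
      calc ‖lam‖ * ‖x0‖ = ‖lam • x0‖ := (norm_smul lam x0).symm
        _ = ‖((w.map f).prod) *ᵥ x0‖ := by rw [heig2]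
        _ ≤ ‖(w.map f).prod‖ * ‖x0‖ := Matrix.linfty_opNorm_mulVec _ _
        _ ≤ (a ^ 2 + a) * ‖x0‖ := mul_le_mul_of_nonneg_right hnorm (norm_nonneg _)
    have hfin : ‖lam‖ ≤ a ^ 2 + a :=
      le_of_mul_le_mul_right hle (norm_pos_iff.mpr hx0ne)
    rw [hsq, hat]
    exact hfin

end Norm

lemma r_lt_one {t : ℂ} (ht : ‖t‖ < (3 - Real.sqrt 5) / 2) :
    ‖t‖ + Real.sqrt (‖t‖) < 1 := by
  set b : ℝ := ‖t‖ with hb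
  have hb0 : 0 ≤ b := norm_nonneg t
  set s : ℝ := Real.sqrt b with hs
  have hs0 : 0 ≤ s := Real.sqrt_nonneg b
  have hs2 : s ^ 2 = b := Real.sq_sqrt hb0
  have h5 : Real.sqrt 5 ^ 2 = 5 := Real.sq_sqrt (by norm_num)
  have h5n : 0 ≤ Real.sqrt 5 := Real.sqrt_nonneg 5
  have h52 : (2 : ℝ) < Real.sqrt 5 := by
    rw [show (2:ℝ) = Real.sqrt 4 by rw [show (4:ℝ) = 2^2 by norm_num, Real.sqrt_sq]; norm_num]
    exact Real.sqrt_lt_sqrt (by norm_num) (by norm_num)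
  have hsc : s < (Real.sqrt 5 - 1) / 2 := by nlinarith
  nlinarith

/-- The ring `ℤ[X]/(X²+X+1)`. -/
noncomputable def Rw : Type := Polynomial ℤ ⧸ Ideal.span {(X ^ 2 + X + 1 : Polynomial ℤ)}
noncomputable instance : CommRing Rw := Ideal.Quotient.commRing _
/-- The quotient map `ℤ[X] → ℤ[X]/(X²+X+1)`. -/
noncomputable def phiw : Polynomial ℤ →+* Rw := Ideal.Quotient.mk _

lemma dvd_det (w : List BGen) : (X ^ 2 + X + 1 : Polynomial ℤ) ∣ (burauPos w - 1).det := by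
  have hφq : phiw (X ^ 2 + X + 1) = 0 :=
    Ideal.Quotient.eq_zero_iff_mem.mpr (Ideal.subset_span rfl)
  have hrel : phiw X ^ 2 + phiw X + 1 = 0 := by
    simpa only [map_add, map_pow, _root_.map_one] using hφq
  set v : Fin 2 → Rw := ![-(phiw X), 1] with hv
  have hfix : ∀ g : BGen, ((burauGen g).map phiw) *ᵥ v = v := by
    intro g
    cases g <;> ext i <;> fin_cases i <;>
      simp [burauGen, hv, Matrix.mulVec, dotProduct, Fin.sum_univ_two,
        Matrix.map_apply] <;>
      first
        | ring1
        | linear_combination hrel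
        | linear_combination -hrel
  have hprod : ∀ l : List BGen, (((l.map burauGen).prod).map phiw) *ᵥ v = v := by
    intro l
    induction l with
    | nil =>
      rw [List.map_nil, List.prod_nil, Matrix.map_one phiw (map_zero phiw) (_root_.map_one phiw)]
      exact Matrix.one_mulVec v
    | cons g l ih =>
      rw [List.map_cons, List.prod_cons, Matrix.map_mul, ← Matrix.mulVec_mulVec, ih, hfix]
  have hA : ((burauPos w - 1).map phiw) *ᵥ v = 0 := by
    have hsub : (burauPos w - 1).map phiw = (burauPos w).map phiw - 1 := by
      ext i j
      by_cases hij : i = j <;>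
        simp [Matrix.map_apply, Matrix.sub_apply, Matrix.one_apply, hij]
    rw [hsub, Matrix.sub_mulVec,
      show (burauPos w).map ⇑phiw = ((w.map burauGen).prod).map ⇑phiw from rfl, hprod w]
    exact (congrArg (v - ·) (Matrix.one_mulVec v)).trans (sub_self v)
  set A : Matrix (Fin 2) (Fin 2) Rw := (burauPos w - 1).map phiw with hAdef
  have h1 : A.det • v = 0 := by
    calc A.det • v = (A.det • (1 : Matrix (Fin 2) (Fin 2) Rw)) *ᵥ v := by
          rw [Matrix.smul_mulVec]
          exact (congrArg (A.det • ·) (Matrix.one_mulVec v)).symm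
      _ = (Matrix.adjugate A * A) *ᵥ v := by rw [Matrix.adjugate_mul]
      _ = Matrix.adjugate A *ᵥ (A *ᵥ v) := (Matrix.mulVec_mulVec v _ _).symm
      _ = Matrix.adjugate A *ᵥ 0 := by rw [hA]
      _ = 0 := Matrix.mulVec_zero _
  have h2 : A.det = 0 := by
    have h := congrFun h1 1
    simpa [hv] using h
  have hdet0 : phiw ((burauPos w - 1).det) = 0 := by
    rw [RingHom.map_det]
    exact h2
  exact Ideal.mem_span_singleton.mp (Ideal.Quotient.eq_zero_iff_mem.mp hdet0)

end Aux

/-- If `w` is a positive 3-braid word which is not a power of `σ₁`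
nor of `σ₂` (it contains both generators), and `|t| < (3 - √5)/2`, then the spectral
radius of `B_t(w)` is `< 1`; in particular `Δ_ŵ(t) ≠ 0` whenever
`0 < |t| < (3 - √5)/2`. -/
theorem burau_spectralRadius_lt_one_near_zero (w : List BGen)
    (h1 : BGen.s1 ∈ w) (h2 : BGen.s2 ∈ w) (t : ℂ)
    (ht : ‖t‖ < (3 - Real.sqrt 5) / 2) :
    spectralRadius ℂ (burauWordC t w) < 1 ∧
    (0 < ‖t‖ → (Polynomial.aeval t) (alexPoly w) ≠ 0) := by
  have hr1 : ‖t‖ + Real.sqrt (‖t‖) < 1 := r_lt_one ht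
  have hdet_ne : (burauWordC t w - 1).det ≠ 0 := by
    intro h0
    obtain ⟨v, hv0, hv⟩ := Matrix.exists_mulVec_eq_zero_iff.mpr h0
    have heig : Matrix.mulVec (burauWordC t w) v = (1 : ℂ) • v := by
      rw [Matrix.sub_mulVec, Matrix.one_mulVec] at hv
      rw [one_smul]
      exact sub_eq_zero.mp hv
    have hb := eigen_bound t w h1 h2 ht hv0 heig
    rw [norm_one] at hb
    linarith
  constructor
  · have hb : ∀ k ∈ spectrum ℂ (burauWordC t w),
        ‖k‖ ≤ ‖t‖ + Real.sqrt (‖t‖) := by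
      intro k hk
      have hdet : (algebraMap ℂ (Matrix (Fin 2) (Fin 2) ℂ) k - burauWordC t w).det = 0 := by
        by_contra h
        exact (spectrum.mem_iff.mp hk) ((Matrix.isUnit_iff_isUnit_det _).mpr (Ne.isUnit h))
      obtain ⟨v, hv0, hv⟩ := Matrix.exists_mulVec_eq_zero_iff.mpr hdet
      have heig : Matrix.mulVec (burauWordC t w) v = k • v := by
        rw [Matrix.sub_mulVec, Algebra.algebraMap_eq_smul_one, Matrix.smul_mulVec,
          Matrix.one_mulVec] at hv
        exact (sub_eq_zero.mp hv).symm
      exact eigen_bound t w h1 h2 ht hv0 heig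
    have hle : spectralRadius ℂ (burauWordC t w)
        ≤ ENNReal.ofReal (‖t‖ + Real.sqrt (‖t‖)) := by
      unfold spectralRadius
      refine iSup₂_le fun k hk => ?_
      rw [← ENNReal.ofReal_coe_nnreal, coe_nnnorm]
      exact ENNReal.ofReal_le_ofReal (hb k hk)
    exact lt_of_le_of_lt hle (ENNReal.ofReal_lt_one.mpr hr1)
  · intro _
    have hq_monic : (X ^ 2 + X + 1 : Polynomial ℤ).Monic := by
      have hdeg : (X + 1 : Polynomial ℤ).degree < 2 := by
        apply lt_of_le_of_lt (Polynomial.degree_add_le _ _)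
        simp [Polynomial.degree_X, Polynomial.degree_one]
      have h := Polynomial.monic_X_pow_add hdeg
      simpa [add_assoc] using h
    have hdvd := dvd_det w
    have heq : (burauPos w - 1).det = (X ^ 2 + X + 1) * alexPoly w := by
      have hmod : (burauPos w - 1).det %ₘ (X ^ 2 + X + 1) = 0 :=
        (Polynomial.modByMonic_eq_zero_iff_dvd hq_monic).mpr hdvd
      have h := Polynomial.modByMonic_add_div ((burauPos w - 1).det) (X ^ 2 + X + 1)
      rw [hmod, zero_add] at h
      rw [alexPoly]
      exact h.symm
    intro hΔ0
    have h1' : (Polynomial.aeval t) ((burauPos w - 1).det) = 0 := by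
      rw [heq, map_mul, hΔ0, mul_zero]
    have h2' : (Polynomial.aeval t) ((burauPos w - 1).det) = (burauWordC t w - 1).det := by
      rw [AlgHom.map_det]
      congr 1
      ext i j
      by_cases hij : i = j <;>
        simp [burauWordC, Matrix.map_apply, Matrix.sub_apply, Matrix.one_apply, hij]
    exact hdet_ne (h2' ▸ h1')
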